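/- arXiv:2408.00916 — 2 statements merged into one kernel-verified Lean document; each statement's English description precedes it below -/
import Mathlib

section
/- Let C > 0 and G be real numbers, let Υ : ℂ → ℂ be any function, and let V, V̄, I, Ī : ℝ → ℂ be differentiable functions satisfying C·V′(t) = −G·V(t) + I(t) + Υ(V(t)) and C·V̄′(t) = −G·V̄(t) + Ī(t) + Υ(V̄(t)) for all t. Then for all t, the shifted storage function 𝓗(t) = (1/2)·C·|V(t) − V̄(t)|² satisfies 𝓗′(t) = −G·|V(t) − V̄(t)|² + Re( conj(V(t) − V̄(t)) · (Υ(V(t)) − Υ(V̄(t))) ) + Re( conj(V(t) − V̄(t)) · (I(t) − Ī(t)) ). -/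
open Complex

lemma normSq_hasDerivAt {E : ℝ → ℂ} {E' : ℂ} {t : ℝ} (h : HasDerivAt E E' t) :
    HasDerivAt (fun s => Complex.normSq (E s))
      (2 * ((starRingEnd ℂ) (E t) * E').re) t := by
  have hre : HasDerivAt (fun s => (E s).re) E'.re t :=
    (Complex.reCLM.hasFDerivAt.comp_hasDerivAt t h)
  have him : HasDerivAt (fun s => (E s).im) E'.im t :=
    (Complex.imCLM.hasFDerivAt.comp_hasDerivAt t h)
  have h2 : HasDerivAt (fun s => (E s).re * (E s).re + (E s).im * (E s).im)
      (E'.re * (E t).re + (E t).re * E'.re + (E'.im * (E t).im + (E t).im * E'.im)) t :=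
    (hre.mul hre).add (him.mul him)
  simp only [Complex.normSq_apply]
  convert h2 using 1
  simp [Complex.mul_re]
  ring

/-- Energy balance for the shifted storage function of a shunt capacitor edge
with a static load disturbance: if `C·V′ = -G·V + I + Υ(V)` along two
trajectories, then `𝓗 = (1/2)·C·|V - V̄|²` satisfies
`𝓗′ = -G·|V - V̄|² + Re(conj(V - V̄)·(Υ(V) - Υ(V̄))) + Re(conj(V - V̄)·(I - Ī))`. -/
theorem shunt_capacitor_shifted_energy_balance
    (C G : ℝ) (hC : 0 < C)
    (Υ : ℂ → ℂ)
    (V Vbar I Ibar : ℝ → ℂ)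
    (hV : Differentiable ℝ V) (hVbar : Differentiable ℝ Vbar)
    (hode : ∀ t, (C : ℂ) * deriv V t = -(G : ℂ) * V t + I t + Υ (V t))
    (hodebar : ∀ t, (C : ℂ) * deriv Vbar t = -(G : ℂ) * Vbar t + Ibar t + Υ (Vbar t)) :
    ∀ t, deriv (fun s => (1/2) * C * Complex.normSq (V s - Vbar s)) t
      = -G * Complex.normSq (V t - Vbar t)
        + ((starRingEnd ℂ) (V t - Vbar t) * (Υ (V t) - Υ (Vbar t))).re
        + ((starRingEnd ℂ) (V t - Vbar t) * (I t - Ibar t)).re := by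
  intro t
  set E : ℝ → ℂ := fun s => V s - Vbar s with hE
  have hEd : HasDerivAt E (deriv V t - deriv Vbar t) t :=
    ((hV t).hasDerivAt).sub ((hVbar t).hasDerivAt)
  have hH : HasDerivAt (fun s => (1/2 : ℝ) * C * Complex.normSq (E s))
      ((1/2 : ℝ) * C * (2 * ((starRingEnd ℂ) (E t) * (deriv V t - deriv Vbar t)).re)) t :=
    (normSq_hasDerivAt hEd).const_mul _
  have hder := hH.deriv
  rw [hder]
  have key : (C : ℂ) * (deriv V t - deriv Vbar t)
      = -(G : ℂ) * E t + (I t - Ibar t) + (Υ (V t) - Υ (Vbar t)) := by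
    simp only [hE]
    rw [mul_sub, hode t, hodebar t]
    ring
  have : (1/2 : ℝ) * C * (2 * ((starRingEnd ℂ) (E t) * (deriv V t - deriv Vbar t)).re)
      = ((starRingEnd ℂ) (E t) * ((C : ℂ) * (deriv V t - deriv Vbar t))).re := by
    rw [show (starRingEnd ℂ) (E t) * ((C : ℂ) * (deriv V t - deriv Vbar t))
        = (C : ℂ) * ((starRingEnd ℂ) (E t) * (deriv V t - deriv Vbar t)) by ring,
      Complex.re_ofReal_mul]
    ring
  rw [this, key]
  have hre : ((starRingEnd ℂ) (E t) * (-(G : ℂ) * E t)).re = -G * Complex.normSq (E t) := by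
    simp [Complex.mul_re, Complex.normSq_apply]
    ring
  rw [mul_add, mul_add, Complex.add_re, Complex.add_re, hre]
  ring
end

section
/- Let n, m be natural numbers, Q an n×n real symmetric matrix, F an n×n real matrix with ⟨v, F·v⟩ ≤ 0 for all v ∈ ℝⁿ, and G an n×m real matrix. Let x, x̄ : ℝ → ℝⁿ be differentiable and u, ū : ℝ → ℝᵐ be functions such that x′(t) = F·Q·x(t) + G·u(t) and x̄′(t) = F·Q·x̄(t) + G·ū(t) for all t, and define outputs y(t) = Gᵀ·Q·x(t), ȳ(t) = Gᵀ·Q·x̄(t). Then the shifted Hamiltonian 𝓗(t) = (1/2)·⟨x(t) − x̄(t), Q·(x(t) − x̄(t))⟩ satisfies the shifted passivity inequality 𝓗′(t) ≤ ⟨y(t) − ȳ(t), u(t) − ū(t)⟩ for all t. -/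
open Matrix

/-- derivative of the quadratic form along a curve -/
lemma quad_hasDerivAt (n : ℕ) (Q : Matrix (Fin n) (Fin n) ℝ)
    (e : ℝ → (Fin n → ℝ)) (t : ℝ) (e' : Fin n → ℝ)
    (he : HasDerivAt e e' t) :
    HasDerivAt (fun s => (e s) ⬝ᵥ (Q *ᵥ e s))
      (e' ⬝ᵥ (Q *ᵥ e t) + (e t) ⬝ᵥ (Q *ᵥ e')) t := by
  have hcomp : ∀ i, HasDerivAt (fun s => e s i) (e' i) t := by
    intro i
    exact (hasDerivAt_pi.mp he) i
  have h : HasDerivAt (fun s => ∑ i, ∑ j, e s i * Q i j * e s j)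
      (∑ i, ∑ j, (e' i * Q i j * e t j + e t i * Q i j * e' j)) t := by
    refine HasDerivAt.fun_sum fun i _ => HasDerivAt.fun_sum fun j _ => ?_
    have := ((hcomp i).mul_const (Q i j)).fun_mul (hcomp j)
    convert this using 1
    try ring
  have heq : (fun s => ∑ i, ∑ j, e s i * Q i j * e s j)
      = fun s => (e s) ⬝ᵥ (Q *ᵥ e s) := by
    funext s
    simp [dotProduct, Matrix.mulVec, Finset.mul_sum, mul_assoc]
  rw [heq] at h
  convert h using 1
  simp [dotProduct, Matrix.mulVec, Finset.mul_sum, mul_assoc, Finset.sum_add_distrib]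

/-- Shifted passivity of a linear port-Hamiltonian system: if the dissipation
matrix `F` satisfies `⟨v, F·v⟩ ≤ 0` for all `v`, then along any two
trajectories of `ẋ = F·Q·x + G·u` with outputs `y = Gᵀ·Q·x`, the shifted
Hamiltonian `𝓗 = (1/2)⟨x - x̄, Q·(x - x̄)⟩` satisfies
`𝓗′ ≤ ⟨y - ȳ, u - ū⟩`. -/
theorem pH_shifted_passivity
    (n m : ℕ)
    (Q F : Matrix (Fin n) (Fin n) ℝ) (G : Matrix (Fin n) (Fin m) ℝ)
    (hQ : Q.IsSymm)
    (hF : ∀ v : Fin n → ℝ, v ⬝ᵥ (F *ᵥ v) ≤ 0)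
    (x xbar : ℝ → (Fin n → ℝ)) (u ubar : ℝ → (Fin m → ℝ))
    (hx : Differentiable ℝ x) (hxbar : Differentiable ℝ xbar)
    (hode : ∀ t, deriv x t = F *ᵥ (Q *ᵥ x t) + G *ᵥ u t)
    (hodebar : ∀ t, deriv xbar t = F *ᵥ (Q *ᵥ xbar t) + G *ᵥ ubar t)
    (y ybar : ℝ → (Fin m → ℝ))
    (hy : ∀ t, y t = Gᵀ *ᵥ (Q *ᵥ x t))
    (hybar : ∀ t, ybar t = Gᵀ *ᵥ (Q *ᵥ xbar t)) :
    ∀ t, deriv (fun s => (1/2) * ((x s - xbar s) ⬝ᵥ (Q *ᵥ (x s - xbar s)))) t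
      ≤ (y t - ybar t) ⬝ᵥ (u t - ubar t) := by
  intro t
  set e : ℝ → (Fin n → ℝ) := fun s => x s - xbar s with he_def
  have heD : HasDerivAt e (deriv x t - deriv xbar t) t :=
    ((hx t).hasDerivAt).sub ((hxbar t).hasDerivAt)
  set e' : Fin n → ℝ := deriv x t - deriv xbar t with he'_def
  have hq := quad_hasDerivAt n Q e t e' heD
  have hd : HasDerivAt (fun s => (1/2) * ((e s) ⬝ᵥ (Q *ᵥ e s)))
      ((1/2) * (e' ⬝ᵥ (Q *ᵥ e t) + (e t) ⬝ᵥ (Q *ᵥ e'))) t := hq.const_mul _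
  rw [show (fun s => (1/2) * ((x s - xbar s) ⬝ᵥ (Q *ᵥ (x s - xbar s))))
      = (fun s => (1/2) * ((e s) ⬝ᵥ (Q *ᵥ e s))) from rfl, hd.deriv]
  -- symmetry: e ⬝ Qe' = e' ⬝ Qe
  have hsymm : (e t) ⬝ᵥ (Q *ᵥ e') = e' ⬝ᵥ (Q *ᵥ e t) := by
    rw [Matrix.dotProduct_mulVec, ← Matrix.mulVec_transpose, hQ.eq, dotProduct_comm]
  rw [hsymm]
  have hsimp : (1:ℝ)/2 * (e' ⬝ᵥ (Q *ᵥ e t) + e' ⬝ᵥ (Q *ᵥ e t)) = e' ⬝ᵥ (Q *ᵥ e t) := by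
    try ring
  rw [hsimp]
  -- e' = F (Q e) + G (u - ubar)
  have he' : e' = F *ᵥ (Q *ᵥ e t) + G *ᵥ (u t - ubar t) := by
    rw [he'_def, hode t, hodebar t]
    simp [he_def, Matrix.mulVec_sub, dotProduct_comm]
    try ring
    try abel
  rw [he', add_dotProduct]
  have h1 : (F *ᵥ (Q *ᵥ e t)) ⬝ᵥ (Q *ᵥ e t) ≤ 0 := by
    rw [dotProduct_comm]; exact hF _
  have h2 : (G *ᵥ (u t - ubar t)) ⬝ᵥ (Q *ᵥ e t) = (y t - ybar t) ⬝ᵥ (u t - ubar t) := by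
    rw [dotProduct_comm, Matrix.dotProduct_mulVec, ← Matrix.mulVec_transpose,
      dotProduct_comm, hy t, hybar t]
    simp [he_def, Matrix.mulVec_sub, dotProduct_comm]
    try ring
  rw [h2]
  linarith
end
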